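/- Fix n ≥ 2 and two families q = (q_{ij}) with q_{ii} = 1, q_{ji} = q_{ij}^{-1}, |q_{ij}| = 1 (and similarly the constant family 1 with all entries equal to 1). On ℓ²({1, …, n}^m), define W^{m,q} on basis vectors by W^{m,q} e_y = q^{σ^{-1}}(x) e_y, where x is the nondecreasing rearrangement of the word y and σ ∈ S_m is any permutation with y_i = x_{σ(i)} for all i. Then: (i) the scalar q^{σ^{-1}}(x) does not depend on the choice of such σ, so W^{m,q} is a well-defined diagonal unitary; and (ii) W^{m,q} P_m^{(1)} = P_m^{(q)} W^{m,q}, where P_m^{(1)} = (1/m!) Σ_σ U^{m,1}_σ is the symmetrization projection and P_m^{(q)} = (1/m!) Σ_σ U^{m,q}_σ is the q-symmetrization projection. -/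

import Mathlib

open scoped BigOperators

/-- `q^σ(x) = ∏ q_{x_{σ⁻¹(k)} x_{σ⁻¹(i)}}`, the product over all pairs `i < k`
with `σ⁻¹(i) > σ⁻¹(k)`. -/
noncomputable def qSigma {n : ℕ} (q : Fin n → Fin n → ℂ) {m : ℕ} (x : Fin m → Fin n)
    (σ : Equiv.Perm (Fin m)) : ℂ :=
  ∏ p ∈ Finset.univ.filter (fun p : Fin m × Fin m => p.1 < p.2 ∧ σ⁻¹ p.2 < σ⁻¹ p.1),
    q (x (σ⁻¹ p.2)) (x (σ⁻¹ p.1))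

/-- The operator `U^{m,q}_σ` on `ℓ²({1,…,n}^m)` with `U^{m,q}_σ e_x = q^σ(x) e_{x ∘ σ⁻¹}`. -/
noncomputable def Uop {n : ℕ} (q : Fin n → Fin n → ℂ) (m : ℕ) (σ : Equiv.Perm (Fin m)) :
    EuclideanSpace ℂ (Fin m → Fin n) →L[ℂ] EuclideanSpace ℂ (Fin m → Fin n) :=
  LinearMap.toContinuousLinearMap
    { toFun := fun f => (WithLp.toLp 2 (fun (y : Fin m → Fin n) =>
          qSigma q (fun i => y (σ i)) σ * f (fun i => y (σ i))) :
        EuclideanSpace ℂ (Fin m → Fin n))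
      map_add' := by
        intro f g
        ext y
        simp [PiLp.add_apply, mul_add]
      map_smul' := by
        intro c f
        ext y
        simp [PiLp.smul_apply, smul_eq_mul] <;> ring }

/-- The `q`-symmetrization operator `P_m = (1/m!) Σ_σ U^{m,q}_σ`. -/
noncomputable def Pm {n : ℕ} (q : Fin n → Fin n → ℂ) (m : ℕ) :
    EuclideanSpace ℂ (Fin m → Fin n) →L[ℂ] EuclideanSpace ℂ (Fin m → Fin n) :=
  ((m.factorial : ℂ))⁻¹ • ∑ σ : Equiv.Perm (Fin m), Uop q m σ

/-! Let `c_q(y)` be the product of `q_{y_k y_i}` over the inversions `i < k`, `y_k < y_i`, of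
the word `y`. It satisfies the cocycle identity `c_q(y) = q^σ(y ∘ σ) c_q(y ∘ σ)`: a pair of
positions not reversed by `σ` contributes the same factor to both sides, and for a reversed pair
the relations `q_{aa} = 1`, `q_{ab} q_{ba} = 1` reconcile the two ways of counting it. A
nondecreasing word has no inversions, so `q^{σ⁻¹}(x) = c_q(y)` whenever `y = x ∘ σ`, which is
independent of `σ`. Hence `W^{m,q}` is the diagonal operator with entries `c_q(y)`, unitary as
`|c_q(y)| = 1`, and the cocycle identity says precisely `W U^{m,1}_σ = U^{m,q}_σ W` for each `σ`;
averaging over `σ` gives the intertwining of the projections. -/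

open Finset

def ltPairs (α : Type*) [Fintype α] [LinearOrder α] : Finset (α × α) :=
  univ.filter fun p => p.1 < p.2

theorem prod_ltPairs_comp_perm {α M : Type*} [Fintype α] [LinearOrder α] [CommMonoid M]
    (F : α → α → M) (σ : Equiv.Perm α) :
    ∏ p ∈ ltPairs α, F (σ p.1) (σ p.2) =
      ∏ p ∈ ltPairs α, if σ⁻¹ p.1 < σ⁻¹ p.2 then F p.1 p.2 else F p.2 p.1 := by
  have hmap : ∏ p ∈ ltPairs α, F (σ p.1) (σ p.2) =
      ∏ p ∈ univ.filter (fun p : α × α => σ⁻¹ p.1 < σ⁻¹ p.2), F p.1 p.2 :=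
    prod_equiv (σ.prodCongr σ) (by simp [ltPairs]) (by simp)
  have hswap : ∏ p ∈ (ltPairs α).filter (fun p => ¬ σ⁻¹ p.1 < σ⁻¹ p.2), F p.2 p.1 =
      ∏ p ∈ univ.filter (fun p : α × α => σ⁻¹ p.1 < σ⁻¹ p.2 ∧ ¬ p.1 < p.2), F p.1 p.2 := by
    refine prod_equiv (Equiv.prodComm α α) (fun p => ?_) (by simp)
    have := (σ⁻¹).injective.eq_iff (a := p.1) (b := p.2)
    simp only [ltPairs, mem_filter, mem_univ, true_and, Equiv.prodComm_apply, Prod.fst_swap,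
      Prod.snd_swap]
    grind
  rw [hmap, prod_ite, hswap, ← prod_filter_mul_prod_filter_not _ (fun p => p.1 < p.2)]
  congr 2 <;> (ext p; simp only [ltPairs, mem_filter, mem_univ, true_and, and_comm])

section InversionCoeff

variable {n m : ℕ} (q : Fin n → Fin n → ℂ)

noncomputable def inversionFactor (a b : Fin n) : ℂ :=
  if b < a then q b a else 1

noncomputable def inversionCoeff (y : Fin m → Fin n) : ℂ :=
  ∏ p ∈ ltPairs (Fin m), inversionFactor q (y p.1) (y p.2)

theorem qSigma_eq_prod_ltPairs (x : Fin m → Fin n) (σ : Equiv.Perm (Fin m)) :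
    qSigma q x σ = ∏ p ∈ ltPairs (Fin m),
      if σ⁻¹ p.2 < σ⁻¹ p.1 then q (x (σ⁻¹ p.2)) (x (σ⁻¹ p.1)) else 1 := by
  rw [qSigma, ltPairs, ← prod_filter, filter_filter]

theorem qSigma_one (x : Fin m → Fin n) (σ : Equiv.Perm (Fin m)) :
    qSigma (fun _ _ => (1 : ℂ)) x σ = 1 :=
  prod_const_one

theorem inversionCoeff_of_monotone {x : Fin m → Fin n} (hx : Monotone x) :
    inversionCoeff q x = 1 :=
  prod_eq_one fun _ hp => if_neg (not_lt.2 (hx (mem_filter.1 hp).2.le))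

theorem norm_inversionCoeff (hq : ∀ i j, ‖q i j‖ = 1) (y : Fin m → Fin n) :
    ‖inversionCoeff q y‖ = 1 := by
  rw [inversionCoeff, norm_prod]
  refine prod_eq_one fun p _ => ?_
  unfold inversionFactor
  split_ifs <;> simp [hq]

variable {q}

theorem mul_inversionFactor_swap (hq1 : ∀ i, q i i = 1) (hqq : ∀ i j, q i j * q j i = 1)
    (a b : Fin n) : q b a * inversionFactor q b a = inversionFactor q a b := by
  unfold inversionFactor
  rcases lt_trichotomy a b with h | rfl | h
  · rw [if_pos h, if_neg h.not_gt, hqq]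
  · simp [hq1]
  · rw [if_neg h.not_gt, if_pos h, mul_one]

theorem inversionCoeff_eq_qSigma_mul (hq1 : ∀ i, q i i = 1) (hqq : ∀ i j, q i j * q j i = 1)
    (y : Fin m → Fin n) (σ : Equiv.Perm (Fin m)) :
    inversionCoeff q y = qSigma q (fun i => y (σ i)) σ * inversionCoeff q (fun i => y (σ i)) := by
  rw [qSigma_eq_prod_ltPairs, inversionCoeff, inversionCoeff,
    prod_ltPairs_comp_perm (fun i k => inversionFactor q (y i) (y k)), ← prod_mul_distrib]
  refine prod_congr rfl fun p hp => ?_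
  have hne : σ⁻¹ p.1 ≠ σ⁻¹ p.2 := (σ⁻¹).injective.ne (mem_filter.1 hp).2.ne
  have hσ : ∀ i, σ (σ⁻¹ i) = i := σ.apply_symm_apply
  simp only [hσ]
  rcases hne.lt_or_gt with h | h
  · rw [if_neg h.not_gt, if_pos h, one_mul]
  · rw [if_pos h, if_neg h.not_gt, mul_inversionFactor_swap hq1 hqq]

theorem qSigma_inv_eq_inversionCoeff (hq1 : ∀ i, q i i = 1) (hqq : ∀ i j, q i j * q j i = 1)
    {x y : Fin m → Fin n} (hx : Monotone x) {σ : Equiv.Perm (Fin m)} (hy : ∀ i, y i = x (σ i)) :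
    qSigma q x σ⁻¹ = inversionCoeff q y := by
  have hx' : (fun i => y (σ⁻¹ i)) = x := funext fun i => by simp [hy]
  rw [inversionCoeff_eq_qSigma_mul hq1 hqq y σ⁻¹, hx', inversionCoeff_of_monotone q hx, mul_one]

end InversionCoeff

section InversionDiag

variable {n : ℕ} (q : Fin n → Fin n → ℂ) (m : ℕ)

/-- The operator `W^{m,q}`: by `qSigma_inv_eq_inversionCoeff`, its eigenvalue `inversionCoeff q y`
at `e_y` is the scalar `q^{σ⁻¹}(x)` of the definition. -/
noncomputable def inversionDiag :
    EuclideanSpace ℂ (Fin m → Fin n) →L[ℂ] EuclideanSpace ℂ (Fin m → Fin n) :=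
  Matrix.toEuclideanCLM (𝕜 := ℂ) (Matrix.diagonal (inversionCoeff q))

theorem inversionDiag_apply (f : EuclideanSpace ℂ (Fin m → Fin n)) (y : Fin m → Fin n) :
    inversionDiag q m f y = inversionCoeff q y * f y := by
  simp [inversionDiag, Matrix.mulVec_diagonal]

theorem Uop_apply (σ : Equiv.Perm (Fin m)) (f : EuclideanSpace ℂ (Fin m → Fin n))
    (y : Fin m → Fin n) :
    Uop q m σ f y = qSigma q (fun i => y (σ i)) σ * f (fun i => y (σ i)) :=
  rfl

theorem inversionDiag_single (y : Fin m → Fin n) :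
    inversionDiag q m (EuclideanSpace.single y 1) =
      inversionCoeff q y • EuclideanSpace.single y (1 : ℂ) := by
  ext z
  rw [inversionDiag_apply, PiLp.smul_apply, smul_eq_mul, PiLp.single_apply]
  split_ifs with h <;> simp [h]

theorem inversionDiag_mem_unitary (hq : ∀ i j, ‖q i j‖ = 1) :
    inversionDiag q m ∈ unitary _ := by
  have hc : ∀ y : Fin m → Fin n, star (inversionCoeff q y) * inversionCoeff q y = 1 := fun y => by
    rw [RCLike.star_def, Complex.conj_mul', norm_inversionCoeff q hq]
    norm_num
  refine Unitary.map_mem Matrix.toEuclideanCLM (Unitary.mem_iff.2 ⟨?_, ?_⟩) <;>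
    rw [Matrix.star_eq_conjTranspose, Matrix.diagonal_conjTranspose,
      Matrix.diagonal_mul_diagonal, ← Matrix.diagonal_one] <;>
    simp only [Pi.star_apply, hc, mul_comm _ (star _)]

variable {q}

theorem inversionDiag_mul_Uop_one (hq1 : ∀ i, q i i = 1) (hqq : ∀ i j, q i j * q j i = 1)
    (σ : Equiv.Perm (Fin m)) :
    inversionDiag q m * Uop (fun _ _ => 1) m σ = Uop q m σ * inversionDiag q m := by
  ext f y
  simp only [mul_apply_eq_comp, inversionDiag_apply, Uop_apply, qSigma_one, one_mul]
  rw [← mul_assoc, ← inversionCoeff_eq_qSigma_mul hq1 hqq]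

theorem inversionDiag_mul_Pm_one (hq1 : ∀ i, q i i = 1) (hqq : ∀ i j, q i j * q j i = 1) :
    inversionDiag q m * Pm (fun _ _ => 1) m = Pm q m * inversionDiag q m := by
  simp only [Pm, mul_smul_comm, smul_mul_assoc, mul_sum, sum_mul,
    inversionDiag_mul_Uop_one m hq1 hqq]

end InversionDiag

theorem stmt12_general {n : ℕ} (q : Fin n → Fin n → ℂ)
    (hq1 : ∀ i, q i i = 1) (hq2 : ∀ i j, q j i = (q i j)⁻¹) (hq3 : ∀ i j, ‖q i j‖ = 1)
    (m : ℕ) :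
    -- (i) independence of the choice of `σ`
    (∀ (x y : Fin m → Fin n), Monotone x →
      ∀ σ σ' : Equiv.Perm (Fin m),
        (∀ i, y i = x (σ i)) → (∀ i, y i = x (σ' i)) →
        qSigma q x σ⁻¹ = qSigma q x σ'⁻¹) ∧
    -- the diagonal operator `W^{m,q}` exists, is unitary, and intertwines the projections
    (∃ W : EuclideanSpace ℂ (Fin m → Fin n) →L[ℂ] EuclideanSpace ℂ (Fin m → Fin n),
      (∀ (y x : Fin m → Fin n) (σ : Equiv.Perm (Fin m)), Monotone x →
        (∀ i, y i = x (σ i)) →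
        W (EuclideanSpace.single y 1) = qSigma q x σ⁻¹ • EuclideanSpace.single y (1 : ℂ)) ∧
      star W * W = 1 ∧ W * star W = 1 ∧
      W * Pm (fun _ _ => (1 : ℂ)) m = Pm q m * W) := by
  have hqq : ∀ i j, q i j * q j i = 1 := fun i j =>
    hq2 i j ▸ mul_inv_cancel₀ (norm_ne_zero_iff.1 (by simp [hq3]))
  have hW := Unitary.mem_iff.1 (inversionDiag_mem_unitary q m hq3)
  refine ⟨fun x y hx σ σ' hy hy' => ?_, inversionDiag q m, fun y x σ hx hy => ?_, hW.1, hW.2,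
    inversionDiag_mul_Pm_one m hq1 hqq⟩
  · rw [qSigma_inv_eq_inversionCoeff hq1 hqq hx hy, qSigma_inv_eq_inversionCoeff hq1 hqq hx hy']
  · rw [qSigma_inv_eq_inversionCoeff hq1 hqq hx hy, inversionDiag_single]

/-- (i) The scalar `q^{σ⁻¹}(x)` attached to a word `y` (with `x` the nondecreasing
rearrangement of `y` and `y_i = x_{σ(i)}`) does not depend on the choice of `σ`, so the
diagonal operator `W^{m,q} e_y = q^{σ⁻¹}(x) e_y` is well defined; it is a diagonal unitary
and (ii) it intertwines the symmetrization projection with the `q`-symmetrization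
projection: `W^{m,q} P_m^{(1)} = P_m^{(q)} W^{m,q}`. -/
theorem stmt12 {n : ℕ} (hn : 2 ≤ n) (q : Fin n → Fin n → ℂ)
    (hq1 : ∀ i, q i i = 1) (hq2 : ∀ i j, q j i = (q i j)⁻¹) (hq3 : ∀ i j, ‖q i j‖ = 1)
    (m : ℕ) :
    -- (i) independence of the choice of `σ`
    (∀ (x y : Fin m → Fin n), Monotone x →
      ∀ σ σ' : Equiv.Perm (Fin m),
        (∀ i, y i = x (σ i)) → (∀ i, y i = x (σ' i)) →
        qSigma q x σ⁻¹ = qSigma q x σ'⁻¹) ∧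
    -- the diagonal operator `W^{m,q}` exists, is unitary, and intertwines the projections
    (∃ W : EuclideanSpace ℂ (Fin m → Fin n) →L[ℂ] EuclideanSpace ℂ (Fin m → Fin n),
      (∀ (y x : Fin m → Fin n) (σ : Equiv.Perm (Fin m)), Monotone x →
        (∀ i, y i = x (σ i)) →
        W (EuclideanSpace.single y 1) = qSigma q x σ⁻¹ • EuclideanSpace.single y (1 : ℂ)) ∧
      star W * W = 1 ∧ W * star W = 1 ∧
      W * Pm (fun _ _ => (1 : ℂ)) m = Pm q m * W) :=
  stmt12_general q hq1 hq2 hq3 m
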